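/- If the update flow network G(C) constructed from a 3-SAT formula C admits a feasible update sequence, then C is satisfiable: defining σ(x_j) = 1 if (w_1^j, X) is resolved before round r = (round of update (s,B)), σ(x_j) = 0 if (w_1^j, X̄) is resolved before r, and arbitrarily otherwise, yields a well-defined satisfying assignment. -/

import Mathlib

/-!
A formal model of congestion-free flow rerouting (network update scheduling).
An update flow network consists of a source `s`, a terminal `t`, edge
capacities, and `k` update flow pairs, each given by an old `s`-`t` path and
an update (new) `s`-`t` path (represented as lists of vertices) with a demand.
An update sequence assigns to every update `(v, i)` (vertex `v`, pair `i`) a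
round; it is feasible if resolving all updates of earlier rounds together with
any subset of the current round always leaves, for every pair, a unique valid
(capacity-respecting) transient `s`-`t` path among the active edges, and the
family of transient paths jointly respects the capacities.
-/

namespace FlowUpdate

variable {V : Type} [DecidableEq V] {k : ℕ}

/-- The edges of a path given as a list of vertices. -/
def edgesOf (p : List V) : List (V × V) := p.zip p.tail

/-- The subpath of `p` from vertex `a` to vertex `z` (inclusive). -/
def segment (p : List V) (a z : V) : List V :=
  ((p.dropWhile (fun v => decide (v ≠ a))).takeWhile (fun v => decide (v ≠ z))) ++ [z]

/-- The outgoing edge of `v` on the path `p`, if any. -/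
def outEdge (p : List V) (v : V) : Option (V × V) :=
  (edgesOf p).find? (fun e => decide (e.1 = v))

/-- An update flow network with `k` update flow pairs. -/
structure UFN (V : Type) (k : ℕ) where
  s : V
  t : V
  cap : V → V → ℕ
  old : Fin k → List V
  new : Fin k → List V
  demand : Fin k → ℕ

namespace UFN

/-- After resolving the set of updates `U`, edge `e` is active for pair `i` iff
it is an old edge whose tail is not yet updated, or a new edge whose tail is
updated. -/
def active (G : UFN V k) (U : Set (V × Fin k)) (i : Fin k) (e : V × V) : Prop :=
  (e ∈ edgesOf (G.old i) ∧ (e.1, i) ∉ U) ∨ (e ∈ edgesOf (G.new i) ∧ (e.1, i) ∈ U)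

/-- `p` is a simple `s`-`t` path all of whose edges satisfy `E`. -/
def IsPathIn (E : V × V → Prop) (s t : V) (p : List V) : Prop :=
  p.head? = some s ∧ p.getLast? = some t ∧ List.Chain' (fun u v => E (u, v)) p ∧ p.Nodup

/-- `p` respects the capacities for the demand of pair `i`. -/
def ValidPath (G : UFN V k) (i : Fin k) (p : List V) : Prop :=
  ∀ e ∈ edgesOf p, G.demand i ≤ G.cap e.1 e.2

/-- `T` is the unique valid transient path of pair `i` after resolving `U`. -/
def TransientPair (G : UFN V k) (U : Set (V × Fin k)) (i : Fin k) (T : List V) : Prop :=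
  IsPathIn (G.active U i) G.s G.t T ∧ G.ValidPath i T ∧
    ∀ p, IsPathIn (G.active U i) G.s G.t p → G.ValidPath i p → p = T

/-- After resolving `U`, every pair has a unique valid transient path, and the
family of transient paths jointly respects the capacities. -/
def TransientFamily (G : UFN V k) (U : Set (V × Fin k)) : Prop :=
  ∃ T : Fin k → List V,
    (∀ i, G.TransientPair U i (T i)) ∧
    (∀ u v : V, (∑ i : Fin k, if (u, v) ∈ edgesOf (T i) then G.demand i else 0) ≤ G.cap u v)

/-- An update sequence (an assignment of rounds to all updates) is feasible if
after resolving all updates of rounds `< r` together with any subset of the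
updates of round `r`, all pairs admit a transient family. -/
def Feasible (G : UFN V k) (R : V × Fin k → ℕ) : Prop :=
  ∀ r : ℕ, ∀ S : Set (V × Fin k), (∀ u ∈ S, R u = r) →
    G.TransientFamily ({u | R u < r} ∪ S)

/-- `p` is a simple path from the source to the terminal. -/
def IsStPath (G : UFN V k) (p : List V) : Prop :=
  p.head? = some G.s ∧ p.getLast? = some G.t ∧ p.Nodup

/-- Well-formedness of an update flow network: all old and new flows are simple
`s`-`t` paths, each pair forms a DAG, each new path respects capacities for its
own demand, and both the old family and the new family jointly respect the
capacities. -/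
def WellFormed (G : UFN V k) : Prop :=
  (∀ i, G.IsStPath (G.old i) ∧ G.IsStPath (G.new i)) ∧
  (∀ i, ∃ ord : V → ℕ, ∀ e ∈ edgesOf (G.old i) ++ edgesOf (G.new i), ord e.1 < ord e.2) ∧
  (∀ i, G.ValidPath i (G.new i)) ∧
  (∀ u v : V, (∑ i : Fin k, if (u, v) ∈ edgesOf (G.old i) then G.demand i else 0) ≤ G.cap u v) ∧
  (∀ u v : V, (∑ i : Fin k, if (u, v) ∈ edgesOf (G.new i) then G.demand i else 0) ≤ G.cap u v)

/-- The common vertices of the old and new path of pair `i`, in path order. -/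
def commons (G : UFN V k) (i : Fin k) : List V :=
  (G.old i).filter (fun v => decide (v ∈ G.new i))

/-- A block of pair `i` is a pair `(a, z)` of consecutive common vertices of the
old and new paths of `i`. -/
def IsBlock (G : UFN V k) (i : Fin k) (b : V × V) : Prop :=
  b ∈ edgesOf (G.commons i)

/-- A (candidate) block: a pair index together with its start and end vertices. -/
abbrev Blk (V : Type) (k : ℕ) := Fin k × V × V

def IsBlk (G : UFN V k) (b : Blk V k) : Prop := G.IsBlock b.1 b.2

/-- The old-path segment of a block. -/
def blkOldSeg (G : UFN V k) (b : Blk V k) : List V := segment (G.old b.1) b.2.1 b.2.2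

/-- The update-path segment of a block. -/
def blkNewSeg (G : UFN V k) (b : Blk V k) : List V := segment (G.new b.1) b.2.1 b.2.2

/-- Block `b1` depends on block `b2` (written `b1 → b2`) if they belong to
different pairs and some edge lies on `b1`'s update path and on `b2`'s old path
with capacity less than the sum of the two demands. -/
def Dep (G : UFN V k) (b1 b2 : Blk V k) : Prop :=
  G.IsBlk b1 ∧ G.IsBlk b2 ∧ b1.1 ≠ b2.1 ∧
  ∃ e : V × V, e ∈ edgesOf (G.blkNewSeg b1) ∧ e ∈ edgesOf (G.blkOldSeg b2) ∧
    G.cap e.1 e.2 < G.demand b1.1 + G.demand b2.1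

/-- The dependency graph contains a directed cycle. -/
def HasDepCycle (G : UFN V k) : Prop := ∃ b : Blk V k, Relation.TransGen G.Dep b b

/-- The number of rounds used by an update sequence. -/
def numRounds [Fintype V] (R : V × Fin k → ℕ) : ℕ :=
  (Finset.image R Finset.univ).card

/-- An update `(v, i)` is empty if `v`'s outgoing old edge and outgoing new edge
for pair `i` coincide (in particular if `v` has no outgoing edge for pair `i`). -/
def EmptyUpd (G : UFN V k) (u : V × Fin k) : Prop :=
  outEdge (G.old u.2) u.1 = outEdge (G.new u.2) u.1

instance (G : UFN V k) (u : V × Fin k) : Decidable (G.EmptyUpd u) :=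
  inferInstanceAs (Decidable (outEdge (G.old u.2) u.1 = outEdge (G.new u.2) u.1))

/-- `R` updates every block in (at most) 3 consecutive rounds: first all internal
update-path vertices of the block, then the start vertex, then all old-path-only
vertices of the block. -/
def BlockPattern (G : UFN V k) (R : V × Fin k → ℕ) : Prop :=
  ∀ b : Blk V k, G.IsBlk b → ∃ r : ℕ,
    (∀ v ∈ G.blkNewSeg b, v ≠ b.2.1 → v ≠ b.2.2 → R (v, b.1) = r) ∧
    R (b.2.1, b.1) = r + 1 ∧
    (∀ v ∈ G.blkOldSeg b, v ∉ G.new b.1 → R (v, b.1) = r + 2)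

/-- The size of the network (total length of the flow paths). -/
def size (G : UFN V k) : ℕ := ∑ i : Fin k, ((G.old i).length + (G.new i).length)

end UFN

end FlowUpdate

namespace FlowUpdate

/-! The update flow network `GC C n` constructed from a 3-SAT formula `C` with
`n` variables, as in the NP-hardness reduction.  The six flow pairs are indexed
by `Fin 6`: `0 = X`, `1 = X̄`, `2,3,4 = D₁,D₂,D₃`, `5 = B`; all have demand 1. -/

/-- A 3-SAT clause: three literals, each a variable index with a polarity. -/
abbrev Clause := Fin 3 → ℕ × Bool

/-- `σ` satisfies the formula `C`. -/
def Satisfies (C : List Clause) (σ : ℕ → Bool) : Prop :=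
  ∀ cl ∈ C, ∃ p : Fin 3, σ (cl p).1 = (cl p).2

/-- All variable indices occurring in `C` are `< n`. -/
def GoodFormula (C : List Clause) (n : ℕ) : Prop :=
  ∀ cl ∈ C, ∀ p : Fin 3, (cl p).1 < n

/-- The vertices of the network `GC C n`. -/
inductive GV where
  | s | t
  | u (i : ℕ) | v (i : ℕ)
  | uu (i : ℕ) (j : Fin 3) | vv (i : ℕ) (j : Fin 3)
  | w1 (j : ℕ) | w2 (j : ℕ)
deriving DecidableEq

/-- Capacities: `(w1 j, w2 j)` has capacity 2, `(u i, v i)` capacity 3, the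
detour edges `(uu i p, vv i p)` capacity 1, all other edges capacity 6. -/
def capC : GV → GV → ℕ
  | .w1 j, .w2 j' => if j = j' then 2 else 6
  | .u i, .v i' => if i = i' then 3 else 6
  | .uu i p, .vv i' p' => if i = i' ∧ p = p' then 1 else 6
  | _, _ => 6

/-- The occurrences (clause index, position) of the literal `(j, pol)` in `C`. -/
def occ (C : List Clause) (j : ℕ) (pol : Bool) : List (ℕ × Fin 3) :=
  (List.range C.length).flatMap fun i =>
    (List.finRange 3).filterMap fun p =>
      if (C.getD i (fun _ => (0, true))) p = (j, pol) then some (i, p) else none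

/-- The detour vertices visited by the old path of the literal `(j, pol)`. -/
def litPath (C : List Clause) (j : ℕ) (pol : Bool) : List GV :=
  (occ C j pol).flatMap fun ip => [GV.uu ip.1 ip.2, GV.vv ip.1 ip.2]

/-- The old path of `X` (`pol = true`) resp. of `X̄` (`pol = false`). -/
def Xold (C : List Clause) (n : ℕ) (pol : Bool) : List GV :=
  [GV.s] ++ ((List.range n).flatMap fun j => [GV.w1 j] ++ litPath C j pol ++ [GV.w2 j]) ++ [GV.t]

/-- The update path of `X` and `X̄`, which is also the old path of `B`. -/
def Xupd (n : ℕ) : List GV :=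
  [GV.s] ++ ((List.range n).flatMap fun j => [GV.w1 j, GV.w2 j]) ++ [GV.t]

/-- The old path of each `D_j`, which is also the update path of `B`. -/
def Dold (m : ℕ) : List GV :=
  [GV.s] ++ ((List.range m).flatMap fun i => [GV.u i, GV.v i]) ++ [GV.t]

/-- The update path of `D_j`, detouring each clause edge through `(uu i j, vv i j)`. -/
def Dupd (m : ℕ) (j : Fin 3) : List GV :=
  [GV.s] ++ ((List.range m).flatMap fun i => [GV.u i, GV.uu i j, GV.vv i j, GV.v i]) ++ [GV.t]

/-- The update flow network constructed from the 3-SAT formula `C` with `n`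
variables. -/
def GC (C : List Clause) (n : ℕ) : UFN GV 6 where
  s := GV.s
  t := GV.t
  cap := capC
  old := ![Xold C n true, Xold C n false, Dold C.length, Dold C.length, Dold C.length, Xupd n]
  new := ![Xupd n, Xupd n, Dupd C.length 0, Dupd C.length 1, Dupd C.length 2, Dold C.length]
  demand := fun _ => 1

end FlowUpdate

/-!
Let `r` be the round of the update `(s, B)`. Resolving `(s, B)` moves `B` onto the clause edges
`(u i, v i)`, of capacity 3, so for every clause `i` some `D_p` must have moved `u i` onto its
detour `(uu i p, vv i p)` before round `r`. That detour has capacity 1 and lies on the old path of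
the pair (`X` or `X̄`) of the `p`-th literal of the clause, so this pair must have updated its
vertex `w1 j` even earlier. Before round `r`, on the other hand, `B` still uses every variable edge
`(w1 j, w2 j)`, of capacity 2, so `X` and `X̄` cannot both have updated `w1 j` by then. Hence the
literal found for each clause is true under `σ`.

Each of these edges is located by following a transient path: at every vertex the active edges of
a pair all come from its old path or all from its new path, depending on whether the vertex is
updated, so the next vertex is forced.
-/

namespace FlowUpdate

section Edges
variable {V α : Type}

theorem mem_edgesOf {l : List V} {x y : V} :
    (x, y) ∈ edgesOf l ↔ ∃ (k : ℕ) (hk : k + 1 < l.length), l[k] = x ∧ l[k + 1] = y := by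
  simp only [edgesOf, List.mem_iff_getElem, List.getElem_zip, List.getElem_tail, List.length_zip,
    List.length_tail, Prod.mk.injEq]
  exact ⟨fun ⟨k, hk, h⟩ => ⟨k, by omega, h⟩, fun ⟨k, hk, h⟩ => ⟨k, by omega, h⟩⟩

theorem fst_mem_of_mem_edgesOf {l : List V} {e : V × V} (h : e ∈ edgesOf l) : e.1 ∈ l :=
  (List.of_mem_zip h).1

theorem snd_mem_of_mem_edgesOf {l : List V} {e : V × V} (h : e ∈ edgesOf l) : e.2 ∈ l :=
  List.mem_of_mem_tail (List.of_mem_zip h).2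

@[simp]
theorem edgesOf_singleton (a : V) : edgesOf [a] = [] := rfl

theorem edgesOf_cons_cons (a b : V) (l : List V) :
    edgesOf (a :: b :: l) = (a, b) :: edgesOf (b :: l) := rfl

theorem edgesOf_append_of_getLast? {p : List V} {z : V} (hp : p.getLast? = some z)
    (q : List V) : edgesOf (p ++ q) = edgesOf p ++ edgesOf (z :: q) := by
  induction p with
  | nil => simp at hp
  | cons c p ih =>
    rcases p with _ | ⟨d, p⟩
    · obtain rfl : c = z := by simpa using hp
      rfl
    · rw [List.getLast?_cons_cons] at hp
      rw [List.cons_append, List.cons_append, edgesOf_cons_cons, ← List.cons_append, ih hp,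
        edgesOf_cons_cons, List.cons_append]

theorem mem_edgesOf_append_cons_cons (l₁ l₂ : List V) (a b : V) :
    (a, b) ∈ edgesOf (l₁ ++ a :: b :: l₂) := by
  rw [mem_edgesOf]
  exact ⟨l₁.length, by simp, by simp, by simp⟩

theorem eq_of_mem_edgesOf_of_nodup {l : List V} (hl : l.Nodup) {a b c : V}
    (hb : (a, b) ∈ edgesOf l) (hc : (a, c) ∈ edgesOf l) : b = c := by
  obtain ⟨k, hk, rfl, rfl⟩ := mem_edgesOf.1 hb
  obtain ⟨i, hi, hik, rfl⟩ := mem_edgesOf.1 hc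
  obtain rfl : i = k := hl.getElem_inj_iff.1 hik
  rfl

theorem getLast?_ne_of_mem_edgesOf {l : List V} (hl : l.Nodup) {a b : V}
    (h : (a, b) ∈ edgesOf l) : l.getLast? ≠ some a := by
  obtain ⟨k, hk, rfl, -⟩ := mem_edgesOf.1 h
  rw [List.getLast?_eq_getElem?, List.getElem?_eq_getElem (by omega), Ne, Option.some_inj,
    hl.getElem_inj_iff]
  omega

theorem mem_edgesOf_range {n x y : ℕ} (h : (x, y) ∈ edgesOf (List.range n)) :
    y = x + 1 ∧ y < n := by
  obtain ⟨k, hk, rfl, rfl⟩ := mem_edgesOf.1 h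
  simp only [List.length_range] at hk
  simpa using hk

theorem mem_edgesOf_cons_flatMap_append {B : α → List V} {hd tl : α → V}
    (hhd : ∀ x, (B x).head? = some (hd x)) (htl : ∀ x, (B x).getLast? = some (tl x)) {b : V}
    {e : V × V} : ∀ {a : V} {l : List α}, e ∈ edgesOf (a :: (l.flatMap B ++ [b])) →
      (l = [] ∧ e = (a, b)) ∨ (∃ y, l.head? = some y ∧ e = (a, hd y)) ∨
      (∃ x ∈ l, e ∈ edgesOf (B x)) ∨ (∃ q ∈ edgesOf l, e = (tl q.1, hd q.2)) ∨
      (∃ y, l.getLast? = some y ∧ e = (tl y, b))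
  | a, [], he => by simpa [edgesOf] using he
  | a, x :: l, he => by
    obtain ⟨r, hr⟩ := List.head?_eq_some_iff.1 (hhd x)
    have hlast : (a :: B x).getLast? = some (tl x) := by
      rw [hr, List.getLast?_cons_cons, ← hr, htl]
    rw [List.flatMap_cons, List.append_assoc, ← List.cons_append,
      edgesOf_append_of_getLast? hlast, hr, edgesOf_cons_cons, ← hr] at he
    rcases List.mem_append.1 he with he | he
    · rcases List.mem_cons.1 he with he | he
      · exact Or.inr (Or.inl ⟨x, rfl, he⟩)
      · exact Or.inr (Or.inr (Or.inl ⟨x, List.mem_cons_self, he⟩))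
    rcases mem_edgesOf_cons_flatMap_append hhd htl he with
      ⟨rfl, h⟩ | ⟨y, hy, h⟩ | ⟨z, hz, h⟩ | ⟨q, hq, h⟩ | ⟨y, hy, h⟩
    · exact Or.inr (Or.inr (Or.inr (Or.inr ⟨x, rfl, h⟩)))
    · obtain ⟨l, rfl⟩ := List.head?_eq_some_iff.1 hy
      exact Or.inr (Or.inr (Or.inr (Or.inl ⟨(x, y), by simp [edgesOf_cons_cons], h⟩)))
    · exact Or.inr (Or.inr (Or.inl ⟨z, List.mem_cons_of_mem _ hz, h⟩))
    · obtain ⟨c, l, rfl⟩ :=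
        List.exists_cons_of_ne_nil (List.ne_nil_of_mem (fst_mem_of_mem_edgesOf hq))
      exact Or.inr (Or.inr (Or.inr (Or.inl
        ⟨q, by rw [edgesOf_cons_cons]; exact List.mem_cons_of_mem _ hq, h⟩)))
    · obtain ⟨c, l, rfl⟩ := List.exists_cons_of_ne_nil (List.ne_nil_of_mem
        (List.mem_of_getLast? hy))
      exact Or.inr (Or.inr (Or.inr (Or.inr ⟨y, by rwa [List.getLast?_cons_cons], h⟩)))

theorem mem_edgesOf_cons_flatMap_range_append {B : ℕ → List V} {hd tl : ℕ → V}
    (hhd : ∀ j, (B j).head? = some (hd j)) (htl : ∀ j, (B j).getLast? = some (tl j))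
    {a b : V} {n : ℕ} {e : V × V} (he : e ∈ edgesOf (a :: ((List.range n).flatMap B ++ [b]))) :
    (n = 0 ∧ e = (a, b)) ∨ (0 < n ∧ e = (a, hd 0)) ∨ (∃ j < n, e ∈ edgesOf (B j)) ∨
      (∃ j, j + 1 < n ∧ e = (tl j, hd (j + 1))) ∨ (0 < n ∧ e = (tl (n - 1), b)) := by
  rcases mem_edgesOf_cons_flatMap_append hhd htl he with
    ⟨hn, h⟩ | ⟨y, hy, h⟩ | ⟨j, hj, h⟩ | ⟨q, hq, h⟩ | ⟨y, hy, h⟩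
  · exact Or.inl ⟨by simpa using hn, h⟩
  · rw [List.head?_range] at hy
    split_ifs at hy with hn
    cases hy
    exact Or.inr (Or.inl ⟨by omega, h⟩)
  · exact Or.inr (Or.inr (Or.inl ⟨j, List.mem_range.1 hj, h⟩))
  · obtain ⟨h2, hlt⟩ := mem_edgesOf_range hq
    exact Or.inr (Or.inr (Or.inr (Or.inl ⟨q.1, by omega, by rw [h, h2]⟩)))
  · rw [List.getLast?_range] at hy
    split_ifs at hy with hn
    cases hy
    exact Or.inr (Or.inr (Or.inr (Or.inr ⟨by omega, h⟩)))

end Edges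

namespace UFN.IsPathIn

variable {V : Type} {E : V × V → Prop} {s t a b : V} {T : List V}

theorem source_mem (hT : IsPathIn E s t T) : s ∈ T :=
  List.mem_of_mem_head? hT.1

theorem exists_edge (hT : IsPathIn E s t T) (ha : a ∈ T) (hat : a ≠ t) :
    ∃ x, (a, x) ∈ edgesOf T ∧ E (a, x) := by
  obtain ⟨k, hk, rfl⟩ := List.getElem_of_mem ha
  have hk1 : k + 1 < T.length := by
    by_contra hlast
    have hT2 := hT.2.1
    rw [List.getLast?_eq_getElem?, show T.length - 1 = k by omega,
      List.getElem?_eq_getElem hk] at hT2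
    exact hat (Option.some.inj hT2)
  exact ⟨T[k + 1], mem_edgesOf.2 ⟨k, hk1, rfl, rfl⟩, List.IsChain.getElem hT.2.2.1 k hk1⟩

theorem edge_mem_of_forced (hT : IsPathIn E s t T) (ha : a ∈ T) (hat : a ≠ t)
    (hb : ∀ x, E (a, x) → x = b) : (a, b) ∈ edgesOf T := by
  obtain ⟨x, hx, hE⟩ := hT.exists_edge ha hat
  rwa [← hb x hE]

theorem mem_of_forced (hT : IsPathIn E s t T) (ha : a ∈ T) (hat : a ≠ t)
    (hb : ∀ x, E (a, x) → x = b) : b ∈ T :=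
  snd_mem_of_mem_edgesOf (hT.edge_mem_of_forced ha hat hb)

end UFN.IsPathIn

/-- `G.active U i` is `switchEdges (G.old i) (G.new i) {v | (v, i) ∈ U}`. -/
def switchEdges {V : Type} (p q : List V) (W : Set V) (e : V × V) : Prop :=
  (e ∈ edgesOf p ∧ e.1 ∉ W) ∨ (e ∈ edgesOf q ∧ e.1 ∈ W)

namespace switchEdges

variable {V : Type} {p q : List V} {W : Set V} {e : V × V}

theorem mem_old (h : switchEdges p q W e) (he : e.1 ∉ W) : e ∈ edgesOf p := by
  rcases h with h | h
  exacts [h.1, absurd h.2 he]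

theorem mem_new (h : switchEdges p q W e) (he : e.1 ∈ W) : e ∈ edgesOf q := by
  rcases h with h | h
  exacts [absurd he h.2, h.1]

theorem mem_old_of_not_mem_new (h : switchEdges p q W e) (he : e.1 ∉ q) : e ∈ edgesOf p := by
  rcases h with h | h
  exacts [h.1, absurd (fst_mem_of_mem_edgesOf h.1) he]

theorem mem_new_of_not_mem_old (h : switchEdges p q W e) (he : e.1 ∉ p) : e ∈ edgesOf q := by
  rcases h with h | h
  exacts [absurd (fst_mem_of_mem_edgesOf h.1) he, h.1]

theorem mem_or (h : switchEdges p q W e) : e ∈ edgesOf p ∨ e ∈ edgesOf q :=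
  h.imp And.left And.left

end switchEdges

section Occurrences
variable {C : List Clause} {i j j' : ℕ} {pol pol' : Bool} {c : ℕ × Fin 3}

theorem mem_occ :
    c ∈ occ C j pol ↔ c.1 < C.length ∧ C.getD c.1 (fun _ => (0, true)) c.2 = (j, pol) := by
  obtain ⟨i, p⟩ := c
  simp only [occ, List.mem_flatMap, List.mem_range, List.mem_filterMap, List.mem_finRange,
    true_and, Option.ite_none_right_eq_some, Option.some.injEq, Prod.mk.injEq]
  constructor
  · rintro ⟨i, hi, p, h, rfl, rfl⟩
    exact ⟨hi, h⟩
  · rintro ⟨hi, h⟩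
    exact ⟨i, hi, p, h, rfl, rfl⟩

theorem mem_occ_getElem (hi : i < C.length) (p : Fin 3) :
    (i, p) ∈ occ C (C[i] p).1 (C[i] p).2 := by
  simp [mem_occ, hi]

theorem eq_of_mem_occ (h : c ∈ occ C j pol) (h' : c ∈ occ C j' pol') : j = j' := by
  rw [mem_occ] at h h'
  exact (Prod.mk.inj (h.2.symm.trans h'.2)).1

theorem occ_nodup : (occ C j pol).Nodup := by
  refine List.nodup_flatMap.2 ⟨fun i _ => (List.nodup_finRange 3).filterMap ?_, ?_⟩
  · intro p p' c hc hc'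
    simp only [Option.mem_def, Option.ite_none_right_eq_some, Option.some.injEq] at hc hc'
    exact (Prod.mk.inj (hc.2.trans hc'.2.symm)).2
  · refine List.nodup_range.pairwise_of_forall_ne fun i _ i' _ hne c hc hc' => hne ?_
    simp only [List.mem_filterMap, List.mem_finRange, true_and,
      Option.ite_none_right_eq_some, Option.some.injEq] at hc hc'
    obtain ⟨p, -, rfl⟩ := hc
    obtain ⟨p', -, h⟩ := hc'
    exact (Prod.mk.inj h).1.symm

end Occurrences

section Paths
variable {C : List Clause} {n m i j : ℕ} {pol : Bool} {p : Fin 3} {c : ℕ × Fin 3} {x : GV}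

theorem Xupd_eq (n : ℕ) :
    Xupd n = GV.s :: ((List.range n).flatMap (fun j => [GV.w1 j, GV.w2 j]) ++ [GV.t]) := by
  simp [Xupd]

theorem Dold_eq (m : ℕ) :
    Dold m = GV.s :: ((List.range m).flatMap (fun i => [GV.u i, GV.v i]) ++ [GV.t]) := by
  simp [Dold]

theorem Dupd_eq (m : ℕ) (p : Fin 3) :
    Dupd m p = GV.s :: ((List.range m).flatMap
      (fun i => [GV.u i, GV.uu i p, GV.vv i p, GV.v i]) ++ [GV.t]) := by
  simp [Dupd]

theorem Xold_eq (C : List Clause) (n : ℕ) (pol : Bool) :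
    Xold C n pol = GV.s :: ((List.range n).flatMap
      (fun j => GV.w1 j :: ((occ C j pol).flatMap (fun c => [GV.uu c.1 c.2, GV.vv c.1 c.2]) ++
        [GV.w2 j])) ++ [GV.t]) := by
  simp [Xold, litPath]

theorem mem_edgesOf_Xupd {e : GV × GV} (h : e ∈ edgesOf (Xupd n)) :
    (n = 0 ∧ e = (GV.s, GV.t)) ∨ (0 < n ∧ e = (GV.s, GV.w1 0)) ∨
      (∃ j < n, e = (GV.w1 j, GV.w2 j)) ∨ (∃ j, j + 1 < n ∧ e = (GV.w2 j, GV.w1 (j + 1))) ∨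
      (0 < n ∧ e = (GV.w2 (n - 1), GV.t)) := by
  rw [Xupd_eq] at h
  simpa [edgesOf_cons_cons] using
    mem_edgesOf_cons_flatMap_range_append (fun _ => rfl) (fun _ => rfl) h

theorem Xupd_succ_s (hn : 0 < n) (h : (GV.s, x) ∈ edgesOf (Xupd n)) : x = GV.w1 0 := by
  rcases mem_edgesOf_Xupd h with h | h | ⟨j, -, h⟩ | ⟨j, -, h⟩ | h <;> simp_all

theorem Xupd_succ_w1 (h : (GV.w1 j, x) ∈ edgesOf (Xupd n)) : x = GV.w2 j := by
  rcases mem_edgesOf_Xupd h with h | h | ⟨j, -, h⟩ | ⟨j, -, h⟩ | h <;> simp_all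

theorem Xupd_succ_w2 (hj : j + 1 < n) (h : (GV.w2 j, x) ∈ edgesOf (Xupd n)) :
    x = GV.w1 (j + 1) := by
  rcases mem_edgesOf_Xupd h with h | h | ⟨j, -, h⟩ | ⟨j, -, h⟩ | h <;> simp_all
  omega

theorem mem_edgesOf_Dold {e : GV × GV} (h : e ∈ edgesOf (Dold m)) :
    (m = 0 ∧ e = (GV.s, GV.t)) ∨ (0 < m ∧ e = (GV.s, GV.u 0)) ∨
      (∃ i < m, e = (GV.u i, GV.v i)) ∨ (∃ i, i + 1 < m ∧ e = (GV.v i, GV.u (i + 1))) ∨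
      (0 < m ∧ e = (GV.v (m - 1), GV.t)) := by
  rw [Dold_eq] at h
  simpa [edgesOf_cons_cons] using
    mem_edgesOf_cons_flatMap_range_append (fun _ => rfl) (fun _ => rfl) h

theorem Dold_succ_s (hm : 0 < m) (h : (GV.s, x) ∈ edgesOf (Dold m)) : x = GV.u 0 := by
  rcases mem_edgesOf_Dold h with h | h | ⟨i, -, h⟩ | ⟨i, -, h⟩ | h <;> simp_all

theorem Dold_succ_u (h : (GV.u i, x) ∈ edgesOf (Dold m)) : x = GV.v i := by
  rcases mem_edgesOf_Dold h with h | h | ⟨i, -, h⟩ | ⟨i, -, h⟩ | h <;> simp_all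

theorem Dold_succ_v (hi : i + 1 < m) (h : (GV.v i, x) ∈ edgesOf (Dold m)) :
    x = GV.u (i + 1) := by
  rcases mem_edgesOf_Dold h with h | h | ⟨i, -, h⟩ | ⟨i, -, h⟩ | h <;> simp_all
  omega

theorem mem_edgesOf_Dupd {e : GV × GV} (h : e ∈ edgesOf (Dupd m p)) :
    (m = 0 ∧ e = (GV.s, GV.t)) ∨ (0 < m ∧ e = (GV.s, GV.u 0)) ∨
      (∃ i < m,
        e = (GV.u i, GV.uu i p) ∨ e = (GV.uu i p, GV.vv i p) ∨ e = (GV.vv i p, GV.v i)) ∨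
      (∃ i, i + 1 < m ∧ e = (GV.v i, GV.u (i + 1))) ∨ (0 < m ∧ e = (GV.v (m - 1), GV.t)) := by
  rw [Dupd_eq] at h
  simpa [edgesOf_cons_cons] using
    mem_edgesOf_cons_flatMap_range_append (fun _ => rfl) (fun _ => rfl) h

theorem Dupd_succ_s (hm : 0 < m) (h : (GV.s, x) ∈ edgesOf (Dupd m p)) : x = GV.u 0 := by
  rcases mem_edgesOf_Dupd h with h | h | ⟨i, -, h | h | h⟩ | ⟨i, -, h⟩ | h <;> simp_all

theorem Dupd_succ_u (h : (GV.u i, x) ∈ edgesOf (Dupd m p)) : x = GV.uu i p := by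
  rcases mem_edgesOf_Dupd h with h | h | ⟨i, -, h | h | h⟩ | ⟨i, -, h⟩ | h <;> simp_all

theorem Dupd_succ_uu (h : (GV.uu i p, x) ∈ edgesOf (Dupd m p)) : x = GV.vv i p := by
  rcases mem_edgesOf_Dupd h with h | h | ⟨i, -, h | h | h⟩ | ⟨i, -, h⟩ | h <;> simp_all

theorem Dupd_succ_vv (h : (GV.vv i p, x) ∈ edgesOf (Dupd m p)) : x = GV.v i := by
  rcases mem_edgesOf_Dupd h with h | h | ⟨i, -, h | h | h⟩ | ⟨i, -, h⟩ | h <;> simp_all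

theorem Dupd_succ_v (hi : i + 1 < m) (h : (GV.v i, x) ∈ edgesOf (Dupd m p)) :
    x = GV.u (i + 1) := by
  rcases mem_edgesOf_Dupd h with h | h | ⟨i, -, h | h | h⟩ | ⟨i, -, h⟩ | h <;> simp_all
  omega

theorem mem_edgesOf_Xold {e : GV × GV} (h : e ∈ edgesOf (Xold C n pol)) :
    (n = 0 ∧ e = (GV.s, GV.t)) ∨ (0 < n ∧ e = (GV.s, GV.w1 0)) ∨
      (∃ j < n, (occ C j pol = [] ∧ e = (GV.w1 j, GV.w2 j)) ∨
        (∃ c, (occ C j pol).head? = some c ∧ e = (GV.w1 j, GV.uu c.1 c.2)) ∨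
        (∃ c ∈ occ C j pol, e = (GV.uu c.1 c.2, GV.vv c.1 c.2)) ∨
        (∃ q ∈ edgesOf (occ C j pol), e = (GV.vv q.1.1 q.1.2, GV.uu q.2.1 q.2.2)) ∨
        (∃ c, (occ C j pol).getLast? = some c ∧ e = (GV.vv c.1 c.2, GV.w2 j))) ∨
      (∃ j, j + 1 < n ∧ e = (GV.w2 j, GV.w1 (j + 1))) ∨ (0 < n ∧ e = (GV.w2 (n - 1), GV.t)) := by
  rw [Xold_eq] at h
  rcases mem_edgesOf_cons_flatMap_range_append (fun _ => rfl)
      (fun _ => by rw [← List.cons_append, List.getLast?_concat]) h with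
    h | h | ⟨j, hj, h⟩ | h | h
  · exact Or.inl h
  · exact Or.inr (Or.inl h)
  · refine Or.inr (Or.inr (Or.inl ⟨j, hj, ?_⟩))
    simpa [edgesOf_cons_cons] using
      mem_edgesOf_cons_flatMap_append (fun _ => rfl) (fun _ => rfl) h
  · exact Or.inr (Or.inr (Or.inr (Or.inl h)))
  · exact Or.inr (Or.inr (Or.inr (Or.inr h)))

/-- The next vertex on the old path of `X` or `X̄` inside the gadget of variable `j`, once only
the occurrences `l` remain to be visited. -/
def litNext (j : ℕ) : List (ℕ × Fin 3) → GV
  | [] => GV.w2 j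
  | c :: _ => GV.uu c.1 c.2

theorem Xold_succ_s (hn : 0 < n) (h : (GV.s, x) ∈ edgesOf (Xold C n pol)) : x = GV.w1 0 := by
  rcases mem_edgesOf_Xold h with h | h | ⟨j, -, h | ⟨c, -, h⟩ | ⟨c, -, h⟩ | ⟨q, -, h⟩ |
      ⟨c, -, h⟩⟩ | ⟨j, -, h⟩ | h <;> simp_all

theorem Xold_succ_w1 (h : (GV.w1 j, x) ∈ edgesOf (Xold C n pol)) :
    x = litNext j (occ C j pol) := by
  rcases mem_edgesOf_Xold h with h | h | ⟨j, -, h | ⟨c, hc, h⟩ | ⟨c, -, h⟩ | ⟨q, -, h⟩ |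
      ⟨c, -, h⟩⟩ | ⟨j, -, h⟩ | h <;> simp_all [litNext]
  obtain ⟨l, hl⟩ := List.head?_eq_some_iff.1 hc
  simp [hl]

theorem Xold_succ_uu (h : (GV.uu c.1 c.2, x) ∈ edgesOf (Xold C n pol)) : x = GV.vv c.1 c.2 := by
  rcases mem_edgesOf_Xold h with h | h | ⟨j, -, h | ⟨c, -, h⟩ | ⟨c, -, h⟩ | ⟨q, -, h⟩ |
      ⟨c, -, h⟩⟩ | ⟨j, -, h⟩ | h <;> simp_all

theorem Xold_succ_w2 (hj : j + 1 < n) (h : (GV.w2 j, x) ∈ edgesOf (Xold C n pol)) :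
    x = GV.w1 (j + 1) := by
  rcases mem_edgesOf_Xold h with h | h | ⟨j, -, h | ⟨c, -, h⟩ | ⟨c, -, h⟩ | ⟨q, -, h⟩ |
      ⟨c, -, h⟩⟩ | ⟨j, -, h⟩ | h <;> simp_all
  omega

theorem Xold_succ_vv {l₁ l₂ : List (ℕ × Fin 3)} (hocc : occ C j pol = l₁ ++ c :: l₂)
    (h : (GV.vv c.1 c.2, x) ∈ edgesOf (Xold C n pol)) : x = litNext j l₂ := by
  have hc : c ∈ occ C j pol := by simp [hocc]
  rcases mem_edgesOf_Xold h with h | h | ⟨j', -, h | ⟨c', -, h⟩ | ⟨c', -, h⟩ | ⟨q, hq, h⟩ |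
      ⟨c', hc', h⟩⟩ | ⟨j', -, h⟩ | h <;>
    simp only [Prod.mk.injEq, GV.vv.injEq, reduceCtorEq, false_and, and_false] at h
  · obtain ⟨⟨h₁, h₂⟩, rfl⟩ := h
    obtain rfl : c = q.1 := Prod.ext h₁ h₂
    obtain rfl : j' = j := eq_of_mem_occ (fst_mem_of_mem_edgesOf hq) hc
    rw [hocc] at hq
    have hnodup : (l₁ ++ q.1 :: l₂).Nodup := hocc ▸ occ_nodup
    cases l₂ with
    | nil => exact absurd (by simp) (getLast?_ne_of_mem_edgesOf hnodup hq)
    | cons d l₂ =>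
      rw [eq_of_mem_edgesOf_of_nodup hnodup hq (mem_edgesOf_append_cons_cons l₁ l₂ q.1 d)]
      rfl
  · obtain ⟨⟨h₁, h₂⟩, rfl⟩ := h
    obtain rfl : c = c' := Prod.ext h₁ h₂
    obtain rfl : j' = j := eq_of_mem_occ (List.mem_of_getLast? hc') hc
    rw [hocc] at hc'
    cases l₂ with
    | nil => rfl
    | cons d l₂ =>
      exact absurd hc' (getLast?_ne_of_mem_edgesOf (hocc ▸ occ_nodup)
        (mem_edgesOf_append_cons_cons l₁ l₂ c d))

end Paths

section TransientPaths
variable {C : List Clause} {n m i j : ℕ} {pol : Bool} {p : Fin 3} {W : Set GV} {T : List GV}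

theorem u_mem_of_Xupd_to_Dold
    (hT : UFN.IsPathIn (switchEdges (Xupd n) (Dold m) W) GV.s GV.t T) (hs : GV.s ∈ W)
    (hi : i < m) : GV.u i ∈ T := by
  induction i with
  | zero =>
    exact hT.mem_of_forced hT.source_mem (by simp) fun x hx => Dold_succ_s hi (hx.mem_new hs)
  | succ i ih =>
    have hv := hT.mem_of_forced (ih (by omega)) (by simp) fun x hx =>
      Dold_succ_u (hx.mem_new_of_not_mem_old (by simp [Xupd]))
    exact hT.mem_of_forced hv (by simp) fun x hx =>
      Dold_succ_v hi (hx.mem_new_of_not_mem_old (by simp [Xupd]))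

theorem uv_mem_of_Xupd_to_Dold
    (hT : UFN.IsPathIn (switchEdges (Xupd n) (Dold m) W) GV.s GV.t T) (hs : GV.s ∈ W)
    (hi : i < m) : (GV.u i, GV.v i) ∈ edgesOf T :=
  hT.edge_mem_of_forced (u_mem_of_Xupd_to_Dold hT hs hi) (by simp) fun x hx =>
    Dold_succ_u (hx.mem_new_of_not_mem_old (by simp [Xupd]))

theorem w1_mem_of_Xupd_to_Dold
    (hT : UFN.IsPathIn (switchEdges (Xupd n) (Dold m) W) GV.s GV.t T) (hs : GV.s ∉ W)
    (hj : j < n) : GV.w1 j ∈ T := by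
  induction j with
  | zero =>
    exact hT.mem_of_forced hT.source_mem (by simp) fun x hx => Xupd_succ_s hj (hx.mem_old hs)
  | succ j ih =>
    have hw2 := hT.mem_of_forced (ih (by omega)) (by simp) fun x hx =>
      Xupd_succ_w1 (hx.mem_old_of_not_mem_new (by simp [Dold]))
    exact hT.mem_of_forced hw2 (by simp) fun x hx =>
      Xupd_succ_w2 hj (hx.mem_old_of_not_mem_new (by simp [Dold]))

theorem w_mem_of_Xupd_to_Dold
    (hT : UFN.IsPathIn (switchEdges (Xupd n) (Dold m) W) GV.s GV.t T) (hs : GV.s ∉ W)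
    (hj : j < n) : (GV.w1 j, GV.w2 j) ∈ edgesOf T :=
  hT.edge_mem_of_forced (w1_mem_of_Xupd_to_Dold hT hs hj) (by simp) fun x hx =>
    Xupd_succ_w1 (hx.mem_old_of_not_mem_new (by simp [Dold]))

theorem v_mem_of_Dold_to_Dupd
    (hT : UFN.IsPathIn (switchEdges (Dold m) (Dupd m p) W) GV.s GV.t T) (hu : GV.u i ∈ T) :
    GV.v i ∈ T := by
  by_cases hW : GV.u i ∈ W
  · have huu := hT.mem_of_forced hu (by simp) fun x hx => Dupd_succ_u (hx.mem_new hW)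
    have hvv := hT.mem_of_forced huu (by simp) fun x hx =>
      Dupd_succ_uu (hx.mem_new_of_not_mem_old (by simp [Dold]))
    exact hT.mem_of_forced hvv (by simp) fun x hx =>
      Dupd_succ_vv (hx.mem_new_of_not_mem_old (by simp [Dold]))
  · exact hT.mem_of_forced hu (by simp) fun x hx => Dold_succ_u (hx.mem_old hW)

theorem u_mem_of_Dold_to_Dupd
    (hT : UFN.IsPathIn (switchEdges (Dold m) (Dupd m p) W) GV.s GV.t T) (hi : i < m) :
    GV.u i ∈ T := by
  induction i with
  | zero =>
    exact hT.mem_of_forced hT.source_mem (by simp) fun x hx =>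
      hx.mem_or.elim (Dold_succ_s hi) (Dupd_succ_s hi)
  | succ i ih =>
    exact hT.mem_of_forced (v_mem_of_Dold_to_Dupd hT (ih (by omega))) (by simp) fun x hx =>
      hx.mem_or.elim (Dold_succ_v hi) (Dupd_succ_v hi)

theorem uv_mem_of_Dold_to_Dupd
    (hT : UFN.IsPathIn (switchEdges (Dold m) (Dupd m p) W) GV.s GV.t T) (hi : i < m)
    (hW : GV.u i ∉ W) : (GV.u i, GV.v i) ∈ edgesOf T :=
  hT.edge_mem_of_forced (u_mem_of_Dold_to_Dupd hT hi) (by simp) fun x hx =>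
    Dold_succ_u (hx.mem_old hW)

theorem detour_mem_of_Dold_to_Dupd
    (hT : UFN.IsPathIn (switchEdges (Dold m) (Dupd m p) W) GV.s GV.t T) (hi : i < m)
    (hW : GV.u i ∈ W) : (GV.uu i p, GV.vv i p) ∈ edgesOf T := by
  have huu := hT.mem_of_forced (u_mem_of_Dold_to_Dupd hT hi) (by simp) fun x hx =>
    Dupd_succ_u (hx.mem_new hW)
  exact hT.edge_mem_of_forced huu (by simp) fun x hx =>
    Dupd_succ_uu (hx.mem_new_of_not_mem_old (by simp [Dold]))

theorem w2_and_detours_mem_of_Xold_to_Xupd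
    (hT : UFN.IsPathIn (switchEdges (Xold C n pol) (Xupd n) W) GV.s GV.t T)
    {l₂ : List (ℕ × Fin 3)} : ∀ {l₁}, occ C j pol = l₁ ++ l₂ → litNext j l₂ ∈ T →
      GV.w2 j ∈ T ∧ ∀ c ∈ l₂, (GV.uu c.1 c.2, GV.vv c.1 c.2) ∈ edgesOf T := by
  induction l₂ with
  | nil => exact fun _ hw2 => ⟨hw2, by simp⟩
  | cons c l₂ ih =>
    intro l₁ hocc (huu : GV.uu c.1 c.2 ∈ T)
    have hdet := hT.edge_mem_of_forced huu (by simp) fun x hx =>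
      Xold_succ_uu (hx.mem_old_of_not_mem_new (by simp [Xupd]))
    have hnext := hT.mem_of_forced (snd_mem_of_mem_edgesOf hdet) (by simp) fun x hx =>
      Xold_succ_vv hocc (hx.mem_old_of_not_mem_new (by simp [Xupd]))
    obtain ⟨hw2, hdets⟩ := ih (l₁ := l₁ ++ [c]) (by simp [hocc]) hnext
    exact ⟨hw2, List.forall_mem_cons.2 ⟨hdet, hdets⟩⟩

theorem w2_mem_of_Xold_to_Xupd
    (hT : UFN.IsPathIn (switchEdges (Xold C n pol) (Xupd n) W) GV.s GV.t T)
    (hw1 : GV.w1 j ∈ T) : GV.w2 j ∈ T := by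
  by_cases hW : GV.w1 j ∈ W
  · exact hT.mem_of_forced hw1 (by simp) fun x hx => Xupd_succ_w1 (hx.mem_new hW)
  · refine (w2_and_detours_mem_of_Xold_to_Xupd hT (l₁ := []) rfl ?_).1
    exact hT.mem_of_forced hw1 (by simp) fun x hx => Xold_succ_w1 (hx.mem_old hW)

theorem w1_mem_of_Xold_to_Xupd
    (hT : UFN.IsPathIn (switchEdges (Xold C n pol) (Xupd n) W) GV.s GV.t T) (hj : j < n) :
    GV.w1 j ∈ T := by
  induction j with
  | zero =>
    exact hT.mem_of_forced hT.source_mem (by simp) fun x hx =>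
      hx.mem_or.elim (Xold_succ_s hj) (Xupd_succ_s hj)
  | succ j ih =>
    exact hT.mem_of_forced (w2_mem_of_Xold_to_Xupd hT (ih (by omega))) (by simp) fun x hx =>
      hx.mem_or.elim (Xold_succ_w2 hj) (Xupd_succ_w2 hj)

theorem w_mem_of_Xold_to_Xupd
    (hT : UFN.IsPathIn (switchEdges (Xold C n pol) (Xupd n) W) GV.s GV.t T) (hj : j < n)
    (hW : GV.w1 j ∈ W) : (GV.w1 j, GV.w2 j) ∈ edgesOf T :=
  hT.edge_mem_of_forced (w1_mem_of_Xold_to_Xupd hT hj) (by simp) fun x hx =>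
    Xupd_succ_w1 (hx.mem_new hW)

theorem detour_mem_of_Xold_to_Xupd
    (hT : UFN.IsPathIn (switchEdges (Xold C n pol) (Xupd n) W) GV.s GV.t T) (hj : j < n)
    (hW : GV.w1 j ∉ W) {c : ℕ × Fin 3} (hc : c ∈ occ C j pol) :
    (GV.uu c.1 c.2, GV.vv c.1 c.2) ∈ edgesOf T := by
  have hnext := hT.mem_of_forced (w1_mem_of_Xold_to_Xupd hT hj) (by simp) fun x hx =>
    Xold_succ_w1 (hx.mem_old hW)
  exact (w2_and_detours_mem_of_Xold_to_Xupd hT (l₁ := []) rfl hnext).2 c hc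

end TransientPaths

theorem UFN.sum_demand_le_cap {V : Type} [DecidableEq V] {k : ℕ} {G : UFN V k}
    {T : Fin k → List V}
    (hcap : ∀ u v : V,
      (∑ i : Fin k, if (u, v) ∈ edgesOf (T i) then G.demand i else 0) ≤ G.cap u v)
    {a b : V} {I : Finset (Fin k)} (hI : ∀ i ∈ I, (a, b) ∈ edgesOf (T i)) :
    ∑ i ∈ I, G.demand i ≤ G.cap a b :=
  calc ∑ i ∈ I, G.demand i
      = ∑ i ∈ I, if (a, b) ∈ edgesOf (T i) then G.demand i else 0 :=
        Finset.sum_congr rfl fun i hi => (if_pos (hI i hi)).symm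
    _ ≤ ∑ i : Fin k, if (a, b) ∈ edgesOf (T i) then G.demand i else 0 :=
        Finset.sum_le_sum_of_subset (Finset.subset_univ I)
    _ ≤ G.cap a b := hcap a b

/-- The clause pair `D_{p+1}`, which detours through position `p` of every clause. -/
def dPair (p : Fin 3) : Fin 6 := ⟨p + 2, by omega⟩

/-- `X` for positive and `X̄` for negative literals: the pair whose old path visits their
occurrences. -/
def litPair : Bool → Fin 6
  | true => 0
  | false => 1

section Reduction
variable {C : List Clause} {n : ℕ} {U : Set (GV × Fin 6)} {P : List GV}

theorem card_le_capC {T : Fin 6 → List GV}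
    (hcap : ∀ u v : GV,
      (∑ i : Fin 6, if (u, v) ∈ edgesOf (T i) then (GC C n).demand i else 0) ≤ (GC C n).cap u v)
    (a b : GV) (I : Finset (Fin 6)) (hI : ∀ i ∈ I, (a, b) ∈ edgesOf (T i)) :
    I.card ≤ capC a b := by
  simpa [GC] using UFN.sum_demand_le_cap hcap hI

theorem isPathIn_of_transientPair_B (h : (GC C n).TransientPair U 5 P) :
    UFN.IsPathIn (switchEdges (Xupd n) (Dold C.length) {v | (v, 5) ∈ U}) GV.s GV.t P :=
  h.1

theorem isPathIn_of_transientPair_dPair {p : Fin 3} (h : (GC C n).TransientPair U (dPair p) P) :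
    UFN.IsPathIn (switchEdges (Dold C.length) (Dupd C.length p) {v | (v, dPair p) ∈ U})
      GV.s GV.t P := by
  fin_cases p <;> exact h.1

theorem isPathIn_of_transientPair_litPair {pol : Bool}
    (h : (GC C n).TransientPair U (litPair pol) P) :
    UFN.IsPathIn (switchEdges (Xold C n pol) (Xupd n) {v | (v, litPair pol) ∈ U})
      GV.s GV.t P := by
  cases pol <;> exact h.1

variable {R : GV × Fin 6 → ℕ}

theorem exists_dPair_resolved_before_B (hR : (GC C n).Feasible R) {i : ℕ} (hi : i < C.length) :
    ∃ p : Fin 3, R (GV.u i, dPair p) < R (GV.s, 5) := by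
  by_contra! hlate
  obtain ⟨T, hT, hcap⟩ := hR (R (GV.s, 5)) {(GV.s, 5)} (by simp)
  have hB := uv_mem_of_Xupd_to_Dold (isPathIn_of_transientPair_B (hT 5)) (by simp) hi
  have hD (p : Fin 3) := uv_mem_of_Dold_to_Dupd (isPathIn_of_transientPair_dPair (hT (dPair p)))
    hi (by simp [hlate p])
  have := card_le_capC hcap (GV.u i) (GV.v i) {dPair 0, dPair 1, dPair 2, 5} (by simp [hB, hD])
  simp [capC, dPair] at this

theorem literal_resolved_before_dPair (hR : (GC C n).Feasible R) {i j : ℕ} {pol : Bool}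
    {p : Fin 3} (hj : j < n) (hocc : (i, p) ∈ occ C j pol) :
    R (GV.w1 j, litPair pol) < R (GV.u i, dPair p) := by
  by_contra! hlate
  obtain ⟨T, hT, hcap⟩ := hR (R (GV.u i, dPair p)) {(GV.u i, dPair p)} (by simp)
  have hD := detour_mem_of_Dold_to_Dupd (isPathIn_of_transientPair_dPair (hT (dPair p)))
    (mem_occ.1 hocc).1 (by simp)
  have hL := detour_mem_of_Xold_to_Xupd (isPathIn_of_transientPair_litPair (hT (litPair pol)))
    hj (by simp [not_lt.2 hlate]) hocc
  have hne : litPair pol ≠ dPair p := by cases pol <;> fin_cases p <;> decide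
  have := card_le_capC hcap (GV.uu i p) (GV.vv i p) {litPair pol, dPair p} (by simp [hD, hL])
  simp [Finset.card_pair hne, capC] at this

theorem not_both_literals_resolved_before_B (hR : (GC C n).Feasible R) {j : ℕ} (hj : j < n) :
    ¬ (R (GV.w1 j, 0) < R (GV.s, 5) ∧ R (GV.w1 j, 1) < R (GV.s, 5)) := by
  rintro ⟨hX, hX'⟩
  obtain ⟨T, hT, hcap⟩ := hR (R (GV.s, 5)) ∅ (by simp)
  have hB := w_mem_of_Xupd_to_Dold (isPathIn_of_transientPair_B (hT 5)) (by simp) hj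
  have h0 := w_mem_of_Xold_to_Xupd (isPathIn_of_transientPair_litPair (pol := true) (hT 0)) hj
    (by simpa [litPair] using hX)
  have h1 := w_mem_of_Xold_to_Xupd (isPathIn_of_transientPair_litPair (pol := false) (hT 1)) hj
    (by simpa [litPair] using hX')
  have := card_le_capC hcap (GV.w1 j) (GV.w2 j) {0, 1, 5} (by simp [hB, h0, h1])
  simp [capC] at this

end Reduction

end FlowUpdate

open FlowUpdate in
/-- If `G(C)` admits a feasible update sequence, then `C` is
satisfiable: setting `σ (x j) = 1` iff `(w1 j, X)` is resolved strictly before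
the round of the update `(s, B)` (which assigns `0` whenever `(w1 j, X̄)` is
resolved before that round, and `0`, arbitrarily, if neither is) yields a
well-defined satisfying assignment. -/
theorem stmt12 (C : List Clause) (n : ℕ) (hC : GoodFormula C n)
    (R : GV × Fin 6 → ℕ) (hR : (GC C n).Feasible R) :
    Satisfies C (fun j => decide (R (GV.w1 j, 0) < R (GV.s, 5))) := by
  intro cl hcl
  obtain ⟨i, hi, rfl⟩ := List.getElem_of_mem hcl
  obtain ⟨p, hp⟩ := exists_dPair_resolved_before_B hR hi
  have hj := hC _ hcl p
  have hlit := (literal_resolved_before_dPair hR hj (mem_occ_getElem hi p)).trans hp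
  refine ⟨p, ?_⟩
  cases hpol : (C[i] p).2 with
  | true => simpa [hpol, litPair] using hlit
  | false =>
    have hX : ¬ R (GV.w1 (C[i] p).1, 0) < R (GV.s, 5) := fun hX =>
      not_both_literals_resolved_before_B hR hj ⟨hX, by simpa [hpol, litPair] using hlit⟩
    simpa [hpol] using hX
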